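/- Let G be a finite group, B a free ℤ_p-module of finite rank with G-action, m ≥ 0, and A a ℤ_pG-submodule of f·B, where f is the exponent of H^{m+1}(G,A). Then the connecting maps in the long exact cohomology sequence of 0 → A → B → B/A → 0 yield an exact sequence H^m(G,B) → H^m(G,B/A) → H^{m+1}(G,A) → 0; that is, the map H^{m+1}(G,A) → H^{m+1}(G,B) induced by the inclusion A ↪ B is zero. -/

import Mathlib

/-!
If `a` is an `(m+1)`-cocycle of `A`, then `f • a = d e` since `f` kills `H^{m+1}(G, A)`. As
`ι(A) ⊆ f • B`, write `ι ∘ e = f • b`; then `f • (ι ∘ a) = d (ι ∘ e) = f • d b`, and since `B` is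
torsion-free, `ι ∘ a = d b`. So `H^{m+1}(ι) = 0`, and exactness of the long cohomology sequence at
`H^{m+1}(G, A)` makes the connecting homomorphism surjective.
-/

namespace GroupCoh

variable (G : Type) [Group G] (M : Type) [AddCommGroup M] [DistribMulAction G M]

/-- Coboundary map on inhomogeneous cochains. -/
def d (m : ℕ) : ((Fin m → G) → M) →+ ((Fin (m + 1) → G) → M) where
  toFun c := fun g => g 0 • c (fun i => g i.succ) +
    ∑ j : Fin (m + 1), ((-1 : ℤ) ^ ((j : ℕ) + 1)) • c (Fin.contractNth j (· * ·) g)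
  map_zero' := by funext g; simp
  map_add' c₁ c₂ := by
    funext g
    simp only [Pi.add_apply, smul_add, Finset.sum_add_distrib]
    abel

/-- Cocycles. -/
def Zc (m : ℕ) : AddSubgroup ((Fin m → G) → M) := (d G M m).ker

/-- Coboundaries. -/
def Bc : (m : ℕ) → AddSubgroup ((Fin m → G) → M)
  | 0 => ⊥
  | (m + 1) => (d G M m).range

/-- Cohomology. -/
def H (m : ℕ) : Type := Zc G M m ⧸ ((Bc G M m).addSubgroupOf (Zc G M m))

noncomputable instance (m : ℕ) : AddCommGroup (H G M m) :=
  QuotientAddGroup.Quotient.addCommGroup _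

/-- Class of a cocycle. -/
def mkH (m : ℕ) (c : (Fin m → G) → M) (hc : c ∈ Zc G M m) : H G M m :=
  QuotientAddGroup.mk ⟨c, hc⟩

end GroupCoh

open GroupCoh Function

namespace GroupCoh

section Cochains

variable {G : Type} [Group G] {M N : Type} [AddCommGroup M] [DistribMulAction G M]
  [AddCommGroup N] [DistribMulAction G N]

lemma d_map (φ : M →+[G] N) {n : ℕ} (c : (Fin n → G) → M) :
    d G N n (fun x => φ (c x)) = fun x => φ (d G M n c x) := by
  funext g
  simp only [d, AddMonoidHom.coe_mk, ZeroHom.coe_mk, map_add, map_sum, map_zsmul,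
    map_smul]

lemma d_d {n : ℕ} (c : (Fin n → G) → M) : d G M (n + 1) (d G M n c) = 0 := by
  let R := Rep.of (Representation.ofDistribMulAction ℤ G M)
  have h := congrArg ModuleCat.Hom.hom
    (groupCohomology.inhomogeneousCochains.d_comp_d (A := R) (n := n))
  rw [ModuleCat.hom_comp] at h
  exact LinearMap.ext_iff.1 h c

lemma mem_Zc_iff {n : ℕ} {c : (Fin n → G) → M} : c ∈ Zc G M n ↔ d G M n c = 0 := Iff.rfl

lemma mem_Bc_zero_iff {c : (Fin 0 → G) → M} : c ∈ Bc G M 0 ↔ c = 0 := AddSubgroup.mem_bot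

lemma map_mem_Zc (φ : M →+[G] N) {n : ℕ} {c : (Fin n → G) → M} (hc : c ∈ Zc G M n) :
    (fun x => φ (c x)) ∈ Zc G N n := by
  rw [mem_Zc_iff, d_map, mem_Zc_iff.mp hc]
  exact funext fun _ => map_zero φ

lemma map_mem_Bc (φ : M →+[G] N) {n : ℕ} {c : (Fin n → G) → M} (hc : c ∈ Bc G M n) :
    (fun x => φ (c x)) ∈ Bc G N n := by
  cases n with
  | zero =>
    rw [mem_Bc_zero_iff.mp hc]
    exact mem_Bc_zero_iff.mpr (funext fun _ => map_zero φ)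
  | succ n =>
    obtain ⟨e, rfl⟩ := hc
    exact ⟨fun x => φ (e x), d_map φ e⟩

lemma mkH_eq_zero_iff {n : ℕ} {c : (Fin n → G) → M} (hc : c ∈ Zc G M n) :
    mkH G M n c hc = 0 ↔ c ∈ Bc G M n :=
  (QuotientAddGroup.eq_zero_iff _).trans AddSubgroup.mem_addSubgroupOf

lemma mkH_nsmul {n : ℕ} {c : (Fin n → G) → M} (hc : c ∈ Zc G M n) (k : ℕ) :
    mkH G M n (k • c) (nsmul_mem hc k) = k • mkH G M n c hc :=
  map_nsmul (QuotientAddGroup.mk' ((Bc G M n).addSubgroupOf (Zc G M n))) k ⟨c, hc⟩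

lemma exists_mkH_eq {n : ℕ} (x : H G M n) : ∃ c hc, mkH G M n c hc = x := by
  obtain ⟨⟨c, hc⟩, rfl⟩ := QuotientAddGroup.mk_surjective x
  exact ⟨c, hc, rfl⟩

def cocycleMap (φ : M →+[G] N) (n : ℕ) : Zc G M n →+ Zc G N n where
  toFun c := ⟨fun x => φ (c.1 x), map_mem_Zc φ c.2⟩
  map_zero' := Subtype.ext (funext fun _ => map_zero φ)
  map_add' c c' := Subtype.ext (funext fun x => map_add φ (c.1 x) (c'.1 x))

noncomputable def Hmap (φ : M →+[G] N) (n : ℕ) : H G M n →+ H G N n :=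
  QuotientAddGroup.map _ _ (cocycleMap φ n) fun _ hc =>
    AddSubgroup.mem_addSubgroupOf.mpr (map_mem_Bc φ (AddSubgroup.mem_addSubgroupOf.mp hc))

lemma Hmap_mkH (φ : M →+[G] N) {n : ℕ} {c : (Fin n → G) → M} (hc : c ∈ Zc G M n) :
    Hmap φ n (mkH G M n c hc) = mkH G N n _ (map_mem_Zc φ hc) := rfl

end Cochains

section ShortExact

variable {G : Type} [Group G] {A B Q : Type} [AddCommGroup A] [DistribMulAction G A]
  [AddCommGroup B] [DistribMulAction G B] [AddCommGroup Q] [DistribMulAction G Q]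
  {ι : A →+[G] B} {π : B →+[G] Q}

lemma map_mem_Bc_of_nsmul_eq_zero [IsAddTorsionFree B] {n f : ℕ}
    (hfH : ∀ h : H G A (n + 1), f • h = 0) (hιf : ∀ a, ∃ b, ι a = f • b)
    {a : (Fin (n + 1) → G) → A} (ha : a ∈ Zc G A (n + 1)) :
    (fun x => ι (a x)) ∈ Bc G B (n + 1) := by
  rcases eq_or_ne f 0 with rfl | hf
  · have hι0 : (fun x => ι (a x)) = 0 := funext fun x => by
      obtain ⟨b, hb⟩ := hιf (a x)
      rw [hb, zero_nsmul]; rfl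
    exact hι0 ▸ zero_mem _
  obtain ⟨e, he⟩ : f • a ∈ Bc G A (n + 1) := by
    rw [← mkH_eq_zero_iff (nsmul_mem ha f), mkH_nsmul ha]
    exact hfH _
  choose b hb using fun x => hιf (e x)
  refine ⟨b, funext fun x => nsmul_right_injective hf ?_⟩
  calc f • d G B n b x = d G B n (f • b) x := by rw [map_nsmul]; rfl
    _ = d G B n (fun y => ι (e y)) x := congrFun (congrArg (d G B n) (funext hb).symm) x
    _ = ι (f • a x) := by rw [d_map, he]; rfl
    _ = f • ι (a x) := map_nsmul ι f (a x)

lemma mem_Zc_of_map_eq_d (hι : Injective ι) {n : ℕ} {c : (Fin n → G) → B}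
    {a : (Fin (n + 1) → G) → A} (hac : (fun x => ι (a x)) = d G B n c) :
    a ∈ Zc G A (n + 1) := by
  refine mem_Zc_iff.mpr (funext fun x => hι ?_)
  rw [← congrFun (d_map ι a) x, hac, d_d]
  exact (map_zero ι).symm

lemma exists_map_eq_d (hπ : Surjective π) (hιπ : Exact ι π) {n : ℕ}
    {q : (Fin n → G) → Q} (hq : q ∈ Zc G Q n) :
    ∃ (c : (Fin n → G) → B) (a : (Fin (n + 1) → G) → A),
      (fun x => π (c x)) = q ∧ (fun x => ι (a x)) = d G B n c := by
  choose c hc using fun x => hπ (q x)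
  have hdc : ∀ x, π (d G B n c x) = 0 := fun x => by
    rw [← congrFun (d_map π c) x, funext hc, mem_Zc_iff.mp hq]; rfl
  choose a ha using fun x => (hιπ _).mp (hdc x)
  exact ⟨c, a, funext hc, funext ha⟩

lemma exists_lift_mem_Zc (hπ : Surjective π) {n : ℕ} {q : (Fin n → G) → Q}
    (hq : q ∈ Bc G Q n) : ∃ c ∈ Zc G B n, (fun x => π (c x)) = q := by
  cases n with
  | zero =>
    exact ⟨0, zero_mem _, by rw [mem_Bc_zero_iff.mp hq]; exact funext fun _ => map_zero π⟩
  | succ n =>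
    obtain ⟨r, rfl⟩ := hq
    choose s hs using fun x => hπ (r x)
    exact ⟨d G B n s, d_d s, by rw [← d_map, funext hs]⟩

lemma mem_Bc_of_map_eq_zero (hι : Injective ι) (hιπ : Exact ι π) {n : ℕ}
    {c : (Fin n → G) → B} {a : (Fin (n + 1) → G) → A} (hc : (fun x => π (c x)) = 0)
    (hac : (fun x => ι (a x)) = d G B n c) : a ∈ Bc G A (n + 1) := by
  choose e he using fun x => (hιπ (c x)).mp (congrFun hc x)
  refine ⟨e, funext fun x => hι ?_⟩
  rw [← congrFun (d_map ι e) x, funext he, ← hac]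

lemma mem_Bc_of_map_mem_Bc (hι : Injective ι) (hπ : Surjective π) (hιπ : Exact ι π) {n : ℕ}
    {c : (Fin n → G) → B} {a : (Fin (n + 1) → G) → A} (hc : (fun x => π (c x)) ∈ Bc G Q n)
    (hac : (fun x => ι (a x)) = d G B n c) : a ∈ Bc G A (n + 1) := by
  obtain ⟨c₀, hc₀, hπc₀⟩ := exists_lift_mem_Zc hπ hc
  refine mem_Bc_of_map_eq_zero hι hιπ (c := c - c₀) ?_ ?_
  · exact funext fun x => by simp only [Pi.sub_apply, map_sub, ← congrFun hπc₀ x, sub_self]; rfl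
  · rw [map_sub, mem_Zc_iff.mp hc₀, sub_zero, hac]

noncomputable def connectingFun (hι : Injective ι) (hπ : Surjective π) (hιπ : Exact ι π) {n : ℕ}
    (q : Zc G Q n) : H G A (n + 1) :=
  have h := exists_map_eq_d hπ hιπ q.2
  mkH G A (n + 1) h.choose_spec.choose (mem_Zc_of_map_eq_d hι h.choose_spec.choose_spec.2)

lemma connectingFun_eq (hι : Injective ι) (hπ : Surjective π) (hιπ : Exact ι π) {n : ℕ}
    {q : Zc G Q n} {c : (Fin n → G) → B} {a : (Fin (n + 1) → G) → A}
    (hc : (fun x => π (c x)) = q.1) (hac : (fun x => ι (a x)) = d G B n c) :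
    connectingFun hι hπ hιπ q = mkH G A (n + 1) a (mem_Zc_of_map_eq_d hι hac) := by
  have h := exists_map_eq_d hπ hιπ q.2
  obtain ⟨hc₀, hac₀⟩ := h.choose_spec.choose_spec
  refine sub_eq_zero.mp ((mkH_eq_zero_iff _).mpr ?_)
  refine mem_Bc_of_map_eq_zero hι hιπ (c := h.choose - c) ?_ ?_
  · exact funext fun x => by
      simp only [Pi.sub_apply, map_sub, congrFun hc₀ x, congrFun hc x, sub_self]; rfl
  · funext x
    calc ι (h.choose_spec.choose x - a x)
        = ι (h.choose_spec.choose x) - ι (a x) := map_sub ι _ _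
      _ = (d G B n (h.choose - c)) x := by
        rw [map_sub]; exact congrArg₂ (· - ·) (congrFun hac₀ x) (congrFun hac x)

lemma connectingFun_add (hι : Injective ι) (hπ : Surjective π) (hιπ : Exact ι π) {n : ℕ}
    (q q' : Zc G Q n) :
    connectingFun hι hπ hιπ (q + q') =
      connectingFun hι hπ hιπ q + connectingFun hι hπ hιπ q' := by
  obtain ⟨c, a, hc, hac⟩ := exists_map_eq_d hπ hιπ q.2
  obtain ⟨c', a', hc', hac'⟩ := exists_map_eq_d hπ hιπ q'.2
  rw [connectingFun_eq hι hπ hιπ hc hac, connectingFun_eq hι hπ hιπ hc' hac',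
    connectingFun_eq hι hπ hιπ (c := c + c') (a := a + a')]
  · rfl
  · rw [AddSubgroup.coe_add, ← hc, ← hc']; exact funext fun x => map_add π (c x) (c' x)
  · rw [map_add, ← hac, ← hac']; exact funext fun x => map_add ι (a x) (a' x)

lemma connectingFun_eq_zero (hι : Injective ι) (hπ : Surjective π) (hιπ : Exact ι π) {n : ℕ}
    {q : Zc G Q n} (hq : q.1 ∈ Bc G Q n) : connectingFun hι hπ hιπ q = 0 := by
  obtain ⟨c, a, hc, hac⟩ := exists_map_eq_d hπ hιπ q.2
  rw [connectingFun_eq hι hπ hιπ hc hac, mkH_eq_zero_iff]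
  exact mem_Bc_of_map_mem_Bc hι hπ hιπ (hc ▸ hq) hac

noncomputable def connectingHom (hι : Injective ι) (hπ : Surjective π) (hιπ : Exact ι π)
    (n : ℕ) : H G Q n →+ H G A (n + 1) :=
  QuotientAddGroup.lift _
    (AddMonoidHom.mk' (connectingFun hι hπ hιπ) (connectingFun_add hι hπ hιπ))
    fun _ hq => connectingFun_eq_zero hι hπ hιπ (AddSubgroup.mem_addSubgroupOf.mp hq)

lemma connectingHom_mkH (hι : Injective ι) (hπ : Surjective π) (hιπ : Exact ι π) {n : ℕ}
    {c : (Fin n → G) → B} {a : (Fin (n + 1) → G) → A} (hq : (fun x => π (c x)) ∈ Zc G Q n)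
    (hac : (fun x => ι (a x)) = d G B n c) (ha : a ∈ Zc G A (n + 1)) :
    connectingHom hι hπ hιπ n (mkH G Q n _ hq) = mkH G A (n + 1) a ha :=
  connectingFun_eq hι hπ hιπ (q := ⟨_, hq⟩) rfl hac

theorem exact_Hmap_connectingHom (hι : Injective ι) (hπ : Surjective π) (hιπ : Exact ι π)
    (n : ℕ) : Exact (Hmap π n) (connectingHom hι hπ hιπ n) := by
  refine fun y => ⟨fun hy => ?_, ?_⟩
  · obtain ⟨q, hq, rfl⟩ := exists_mkH_eq y
    obtain ⟨c, a, rfl, hac⟩ := exists_map_eq_d hπ hιπ hq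
    rw [connectingHom_mkH hι hπ hιπ hq hac (mem_Zc_of_map_eq_d hι hac), mkH_eq_zero_iff] at hy
    obtain ⟨e, rfl⟩ := hy
    have hz : c - (fun x => ι (e x)) ∈ Zc G B n := by
      rw [mem_Zc_iff, map_sub, d_map, ← hac]; exact sub_self _
    refine ⟨mkH G B n _ hz, ?_⟩
    rw [Hmap_mkH]
    congr 1
    exact funext fun x => by simp [hιπ.apply_apply_eq_zero]
  · rintro ⟨y, rfl⟩
    obtain ⟨c, hc, rfl⟩ := exists_mkH_eq y
    have hac : (fun x => ι ((0 : (Fin (n + 1) → G) → A) x)) = d G B n c := by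
      rw [mem_Zc_iff.mp hc]; exact funext fun _ => map_zero ι
    exact connectingHom_mkH hι hπ hιπ _ hac (zero_mem _)

lemma connectingHom_surjective (hι : Injective ι) (hπ : Surjective π) (hιπ : Exact ι π) {n : ℕ}
    (hB : ∀ a ∈ Zc G A (n + 1), (fun x => ι (a x)) ∈ Bc G B (n + 1)) :
    Surjective (connectingHom hι hπ hιπ n) := by
  intro y
  obtain ⟨a, ha, rfl⟩ := exists_mkH_eq y
  obtain ⟨c, hc⟩ := hB a ha
  have hq : (fun x => π (c x)) ∈ Zc G Q n := by
    rw [mem_Zc_iff, d_map, hc]; exact funext fun x => hιπ.apply_apply_eq_zero (a x)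
  exact ⟨_, connectingHom_mkH hι hπ hιπ hq hc.symm ha⟩

end ShortExact

end GroupCoh

theorem exact_sequence_of_submodule_of_smul_general (p : ℕ) [Fact p.Prime]
    (G : Type) [Group G] (m : ℕ)
    (A : Type) [AddCommGroup A] [Module (PadicInt p) A] [DistribMulAction G A]
    (B : Type) [AddCommGroup B] [Module (PadicInt p) B] [DistribMulAction G B]
    [Module.Free (PadicInt p) B]
    (Q : Type) [AddCommGroup Q] [Module (PadicInt p) Q] [DistribMulAction G Q]
    (ι : A →ₗ[PadicInt p] B) (π : B →ₗ[PadicInt p] Q)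
    (hι : ∀ (g : G) (a : A), ι (g • a) = g • ι a)
    (hπ : ∀ (g : G) (b : B), π (g • b) = g • π b)
    (hinj : Function.Injective ι) (hsurj : Function.Surjective π)
    (hexact : Function.Exact ι π)
    (f : ℕ) (hf : f = AddMonoid.exponent (H G A (m + 1)))
    (hAfB : ∀ a : A, ∃ b : B, ι a = f • b) :
    (∀ a : (Fin (m + 1) → G) → A, a ∈ Zc G A (m + 1) →
        (fun x => ι (a x)) ∈ Bc G B (m + 1)) ∧
    (∃ (F : H G B m →+ H G Q m) (δ : H G Q m →+ H G A (m + 1)),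
      (∀ (c : (Fin m → G) → B) (hc : c ∈ Zc G B m) (hc' : (fun x => π (c x)) ∈ Zc G Q m),
          F (mkH G B m c hc) = mkH G Q m (fun x => π (c x)) hc') ∧
      (∀ (c : (Fin m → G) → B) (a : (Fin (m + 1) → G) → A)
          (ha : a ∈ Zc G A (m + 1)) (hq : (fun x => π (c x)) ∈ Zc G Q m),
          (∀ x, ι (a x) = d G B m c x) →
          δ (mkH G Q m (fun x => π (c x)) hq) = mkH G A (m + 1) a ha) ∧
      Function.Exact F δ ∧ Function.Surjective δ) := by
  let ιG : A →+[G] B := { ι.toAddMonoidHom with map_smul' := hι }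
  let πG : B →+[G] Q := { π.toAddMonoidHom with map_smul' := hπ }
  have : IsAddTorsionFree B := .of_isTorsionFree (PadicInt p) B
  have hB : ∀ a ∈ Zc G A (m + 1), (fun x => ι (a x)) ∈ Bc G B (m + 1) := fun a ha =>
    map_mem_Bc_of_nsmul_eq_zero (ι := ιG) (fun h => hf ▸ AddMonoid.exponent_nsmul_eq_zero h)
      hAfB ha
  exact ⟨hB, Hmap πG m, connectingHom (ι := ιG) (π := πG) hinj hsurj hexact m,
    fun c hc _ => Hmap_mkH πG hc,
    fun c a ha hq hac => connectingHom_mkH hinj hsurj hexact hq (funext hac) ha,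
    exact_Hmap_connectingHom hinj hsurj hexact m,
    connectingHom_surjective hinj hsurj hexact hB⟩

/-- Let `G` be a finite group, `B` a `G`-module free of finite rank over `ℤ_p`, `m ≥ 0`, and
`A` a `ℤ_p G`-submodule of `f·B` (given by an injective equivariant map `ι : A → B` whose image
is contained in `f·B`), where `f` is the exponent of `H^{m+1}(G, A)`. Let `0 → A → B → B/A → 0`
be the corresponding short exact sequence (with `Q = B/A` and `π : B → Q`). Then:
(i) the map `H^{m+1}(G, A) → H^{m+1}(G, B)` induced by the inclusion `A ↪ B` is zero, and
(ii) the long exact cohomology sequence yields an exact sequence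
`H^m(G,B) → H^m(G,B/A) → H^{m+1}(G,A) → 0`, where the first map is induced by `π` and the
second is the connecting homomorphism. -/
theorem exact_sequence_of_submodule_of_smul (p : ℕ) [Fact p.Prime]
    (G : Type) [Group G] [Fintype G] (m : ℕ)
    (A : Type) [AddCommGroup A] [Module (PadicInt p) A] [DistribMulAction G A]
    [SMulCommClass G (PadicInt p) A]
    (B : Type) [AddCommGroup B] [Module (PadicInt p) B] [DistribMulAction G B]
    [SMulCommClass G (PadicInt p) B]
    [Module.Free (PadicInt p) B] [Module.Finite (PadicInt p) B]
    (Q : Type) [AddCommGroup Q] [Module (PadicInt p) Q] [DistribMulAction G Q]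
    [SMulCommClass G (PadicInt p) Q]
    (ι : A →ₗ[PadicInt p] B) (π : B →ₗ[PadicInt p] Q)
    (hι : ∀ (g : G) (a : A), ι (g • a) = g • ι a)
    (hπ : ∀ (g : G) (b : B), π (g • b) = g • π b)
    (hinj : Function.Injective ι) (hsurj : Function.Surjective π)
    (hexact : Function.Exact ι π)
    (f : ℕ) (hf : f = AddMonoid.exponent (H G A (m + 1)))
    (hAfB : ∀ a : A, ∃ b : B, ι a = f • b) :
    (∀ a : (Fin (m + 1) → G) → A, a ∈ Zc G A (m + 1) →
        (fun x => ι (a x)) ∈ Bc G B (m + 1)) ∧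
    (∃ (F : H G B m →+ H G Q m) (δ : H G Q m →+ H G A (m + 1)),
      (∀ (c : (Fin m → G) → B) (hc : c ∈ Zc G B m) (hc' : (fun x => π (c x)) ∈ Zc G Q m),
          F (mkH G B m c hc) = mkH G Q m (fun x => π (c x)) hc') ∧
      (∀ (c : (Fin m → G) → B) (a : (Fin (m + 1) → G) → A)
          (ha : a ∈ Zc G A (m + 1)) (hq : (fun x => π (c x)) ∈ Zc G Q m),
          (∀ x, ι (a x) = d G B m c x) →
          δ (mkH G Q m (fun x => π (c x)) hq) = mkH G A (m + 1) a ha) ∧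
      Function.Exact F δ ∧ Function.Surjective δ) :=
  exact_sequence_of_submodule_of_smul_general p G m A B Q ι π hι hπ hinj hsurj hexact f hf hAfB
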